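/- arXiv:2404.04488 — 2 statements merged into one kernel-verified Lean document; each statement's English description precedes it below -/
import Mathlib

section
/- (Hardy-type inequality on the half-space) Let N ≥ 3. For every continuously differentiable function u : ℝ^N → ℝ with compact support, (N²/4)∫_{ℝ^N_+} u(x)² dx ≤ ∫_{ℝ^N_+} (x·∇u(x))² dx. -/
open MeasureTheory Real Filter Topology Asymptotics

noncomputable section

/-- The index of the last coordinate of `ℝ^N`. -/
def lastIdx (N : ℕ) (hN : 0 < N) : Fin N := ⟨N - 1, by omega⟩

/-- The open upper half-space `ℝ^N_+ = {x : x_N > 0}`. -/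
def upperHalf (N : ℕ) (hN : 0 < N) : Set (EuclideanSpace ℝ (Fin N)) :=
  {x | 0 < x (lastIdx N hN)}

/-- The closed upper half-space `{x : x_N ≥ 0}`. -/
def closedHalf (N : ℕ) (hN : 0 < N) : Set (EuclideanSpace ℝ (Fin N)) :=
  {x | 0 ≤ x (lastIdx N hN)}

/-- The embedding `ℝ^{N-1} → ℝ^N`, `x' ↦ (x', 0)`. -/
def pad (N : ℕ) (x' : EuclideanSpace ℝ (Fin (N - 1))) : EuclideanSpace ℝ (Fin N) :=
  (EuclideanSpace.equiv (Fin N) ℝ).symm fun i =>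
    if h : (i : ℕ) < N - 1 then x' ⟨i, h⟩ else 0

/-- The partial derivative `∂u/∂x_i`. -/
def pderiv' {N : ℕ} (u : EuclideanSpace ℝ (Fin N) → ℝ) (i : Fin N)
    (x : EuclideanSpace ℝ (Fin N)) : ℝ :=
  fderiv ℝ u x (EuclideanSpace.single i 1)

/-- The Laplacian `Δu = ∑_i ∂²u/∂x_i²`. -/
def lap {N : ℕ} (u : EuclideanSpace ℝ (Fin N) → ℝ) (x : EuclideanSpace ℝ (Fin N)) : ℝ :=
  ∑ i, pderiv' (pderiv' u i) i x

/-- The radial derivative `x · ∇u`. -/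
def radDeriv {N : ℕ} (u : EuclideanSpace ℝ (Fin N) → ℝ) (x : EuclideanSpace ℝ (Fin N)) : ℝ :=
  ∑ i, x i * pderiv' u i x

/-- The exponential weight `K(x) = e^{|x|²/4}`. -/
def Kw {N : ℕ} (x : EuclideanSpace ℝ (Fin N)) : ℝ := Real.exp (‖x‖ ^ 2 / 4)

/-- `|x'|²`, the squared norm of the first `N - 1` coordinates of `x`. -/
def normSq' {N : ℕ} (x : EuclideanSpace ℝ (Fin N)) : ℝ :=
  ∑ i : Fin N, if (i : ℕ) < N - 1 then (x i) ^ 2 else 0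

/-- `k_N = (√(N(N-2)))^{(N-2)/2}`. -/
def kN (N : ℕ) : ℝ := Real.sqrt ((N : ℝ) * ((N : ℝ) - 2)) ^ (((N : ℝ) - 2) / 2)

/-- `x_N⁰ = √(N/(N-2))`. -/
def xN0 (N : ℕ) : ℝ := Real.sqrt ((N : ℝ) / ((N : ℝ) - 2))

/-- The critical Sobolev exponent `2^* = 2N/(N-2)`. -/
def pstar (N : ℕ) : ℝ := 2 * (N : ℝ) / ((N : ℝ) - 2)

/-- The critical trace exponent `2_* = 2(N-1)/(N-2)`. -/
def pstarb (N : ℕ) : ℝ := 2 * ((N : ℝ) - 1) / ((N : ℝ) - 2)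

/-- The instanton `U_ε` (denoted `φ_{ε,1}` in the paper). -/
def Ueps (N : ℕ) (hN : 0 < N) (ε : ℝ) (x : EuclideanSpace ℝ (Fin N)) : ℝ :=
  kN N * (ε / (ε ^ 2 + normSq' x + (x (lastIdx N hN) + ε * xN0 N) ^ 2)) ^ (((N : ℝ) - 2) / 2)

/-- The instanton `Û_ε` for the trace inequality. -/
def Uhat (N : ℕ) (hN : 0 < N) (ε : ℝ) (x : EuclideanSpace ℝ (Fin N)) : ℝ :=
  (ε / (normSq' x + (x (lastIdx N hN) + ε) ^ 2)) ^ (((N : ℝ) - 2) / 2)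

/-- A cutoff `φ` is admissible if it is smooth, `[0,1]`-valued, `≡ 1` on `B₁(0) ∩ {x_N ≥ 0}`
and `≡ 0` on `{x_N ≥ 0} \ B₂(0)`. -/
structure AdmissibleCutoff (N : ℕ) (hN : 0 < N) (φ : EuclideanSpace ℝ (Fin N) → ℝ) : Prop where
  smooth : ContDiff ℝ (⊤ : ℕ∞) φ
  mem01 : ∀ x, φ x ∈ Set.Icc (0 : ℝ) 1
  eq_one : ∀ x ∈ Metric.ball (0 : EuclideanSpace ℝ (Fin N)) 1 ∩ closedHalf N hN, φ x = 1
  eq_zero : ∀ x ∈ closedHalf N hN \ Metric.ball (0 : EuclideanSpace ℝ (Fin N)) 2, φ x = 0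

/-- The test function `u_ε = K^{-1/2} φ U_ε`. -/
def ueps (N : ℕ) (hN : 0 < N) (φ : EuclideanSpace ℝ (Fin N) → ℝ) (ε : ℝ)
    (x : EuclideanSpace ℝ (Fin N)) : ℝ :=
  Real.exp (-‖x‖ ^ 2 / 8) * φ x * Ueps N hN ε x

/-- The test function `û_ε = K^{-1/2} φ Û_ε`. -/
def uhat (N : ℕ) (hN : 0 < N) (φ : EuclideanSpace ℝ (Fin N) → ℝ) (ε : ℝ)
    (x : EuclideanSpace ℝ (Fin N)) : ℝ :=
  Real.exp (-‖x‖ ^ 2 / 8) * φ x * Uhat N hN ε x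

/-- The area of the unit sphere in `ℝ^n` (equal to `n` times the volume of the unit ball). -/
def sphereArea (n : ℕ) : ℝ :=
  n * (volume (Metric.ball (0 : EuclideanSpace ℝ (Fin n)) 1)).toReal

/-- The Beta function `B(a,b) = Γ(a)Γ(b)/Γ(a+b)`. -/
def betaFn (a b : ℝ) : ℝ := Real.Gamma a * Real.Gamma b / Real.Gamma (a + b)

/-- The constant `α_N`. -/
def alphaN (N : ℕ) (hN : 0 < N) : ℝ :=
  ((N : ℝ) - 2) * kN N ^ 2 / 2 *
    ∫ y in upperHalf N hN,
      (normSq' y + y (lastIdx N hN) * (y (lastIdx N hN) + xN0 N)) /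
        (1 + normSq' y + (y (lastIdx N hN) + xN0 N) ^ 2) ^ (N - 1)

/-- The constant `β_N`. -/
def betaN (N : ℕ) (hN : 0 < N) : ℝ :=
  kN N ^ pstar N / (2 * ((N : ℝ) - 2)) *
    ∫ y in upperHalf N hN,
      ‖y‖ ^ 2 / (1 + normSq' y + (y (lastIdx N hN) + xN0 N) ^ 2) ^ N

/-- The constant `γ_N`. -/
def gammaN (N : ℕ) : ℝ :=
  kN N ^ pstarb N / (4 * ((N : ℝ) - 2)) *
    ∫ y' : EuclideanSpace ℝ (Fin (N - 1)),
      ‖y'‖ ^ 2 / (1 + ‖y'‖ ^ 2 + xN0 N ^ 2) ^ (N - 1)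

/-- The constant `d_N`. -/
def dN (N : ℕ) (hN : 0 < N) : ℝ :=
  kN N ^ 2 *
    ∫ y in upperHalf N hN,
      ((1 + normSq' y + (y (lastIdx N hN) + xN0 N) ^ 2) ^ (N - 2))⁻¹

/-- The threshold `λ_N^* = α_N/d_N + (2/2^*)·β_N/d_N + (2/2_*)·γ_N/d_N`. -/
def lamStar (N : ℕ) (hN : 0 < N) : ℝ :=
  alphaN N hN / dN N hN + (2 / pstar N) * betaN N hN / dN N hN
    + (2 / pstarb N) * gammaN N / dN N hN

/-- The threshold `λ̄` of Theorem 1.2 (1). -/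
def lamBar (N : ℕ) (hN : 0 < N) : ℝ :=
  if N = 3 then (3 + Real.sqrt 5) / 4 else if N = 4 then 1 else lamStar N hN

/-- The threshold `λ̂` of Theorem 1.3 (1). -/
def lamHat (N : ℕ) : ℝ :=
  if N = 3 then (3 + Real.sqrt 5) / 4 else (N : ℝ) / 4 + ((N : ℝ) - 4) / 8

/-- The shifted bubble `φ_{ε,τ}`. -/
def phiB (N : ℕ) (hN : 0 < N) (ε τ : ℝ) (x : EuclideanSpace ℝ (Fin N)) : ℝ :=
  kN N * (ε / (ε ^ 2 + normSq' x + (x (lastIdx N hN) + ε * τ * xN0 N) ^ 2))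
    ^ (((N : ℝ) - 2) / 2)

/-- The function `ψ(x) = e^{-|x|²/(8√5)}` (dimension 3). -/
def psi3 (x : EuclideanSpace ℝ (Fin 3)) : ℝ := Real.exp (-‖x‖ ^ 2 / (8 * Real.sqrt 5))

/-- The test function `v_ε = K^{-1/2} ψ U_ε` (dimension 3). -/
def veps (ε : ℝ) (x : EuclideanSpace ℝ (Fin 3)) : ℝ :=
  Real.exp (-‖x‖ ^ 2 / 8) * psi3 x * Ueps 3 (by norm_num) ε x

/-- `K₁ = ∫_{ℝ³₊} |∇U_ε|²` (independent of `ε`). -/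
def K1const : ℝ :=
  ∫ x in upperHalf 3 (by norm_num), ‖gradient (Ueps 3 (by norm_num) 1) x‖ ^ 2

/-- `K₂ = ∫_{ℝ³₊} U_ε⁶` (independent of `ε`). -/
def K2const : ℝ := ∫ x in upperHalf 3 (by norm_num), Ueps 3 (by norm_num) 1 x ^ 6

/-- `K₃ = ∫_{ℝ²} U_ε(x',0)⁴ dx'` (independent of `ε`). -/
def K3const : ℝ :=
  ∫ x' : EuclideanSpace ℝ (Fin 2), Ueps 3 (by norm_num) 1 (pad 3 x') ^ 4

/-- `A_N = ∫_{ℝ^N_+} |∇Û_ε|²` (independent of `ε`). -/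
def Ahat (N : ℕ) (hN : 0 < N) : ℝ :=
  ∫ x in upperHalf N hN, ‖gradient (Uhat N hN 1) x‖ ^ 2

/-- The constant `α̂_N`. -/
def alphaHat (N : ℕ) : ℝ :=
  sphereArea (N - 1) * ((N : ℝ) - 2) / (4 * ((N : ℝ) - 4)) *
    (betaFn (((N : ℝ) + 1) / 2) (((N : ℝ) - 3) / 2)
      + 1 / ((N : ℝ) - 3) * betaFn (((N : ℝ) - 1) / 2) (((N : ℝ) - 1) / 2))

/-- The constant `γ̂_N`. -/
def gammaHat (N : ℕ) : ℝ :=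
  sphereArea (N - 1) / (8 * ((N : ℝ) - 2)) * betaFn (((N : ℝ) + 1) / 2) (((N : ℝ) - 3) / 2)

/-- The constant `d̂_N`. -/
def dHat (N : ℕ) : ℝ :=
  sphereArea (N - 1) / (2 * ((N : ℝ) - 4)) * betaFn (((N : ℝ) - 1) / 2) (((N : ℝ) - 3) / 2)

/-- `T_N = ∫_{ℝ^{N-1}} Û_ε(x',0)^{2_*} dx'` (independent of `ε`;
`T_N = B_N^{2_*/2}` in the paper's notation). -/
def Tconst (N : ℕ) (hN : 0 < N) : ℝ :=
  ∫ x' : EuclideanSpace ℝ (Fin (N - 1)), Uhat N hN 1 (pad N x') ^ pstarb N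

/-!
The vector field `x ↦ u(x)² x` has divergence `N u² + 2 u (x·∇u)`, and its normal component
`x_N u²` vanishes on the boundary hyperplane `{x_N = 0}`. By the divergence theorem,
`∫_{ℝ^N_+} (N u² + 2 u (x·∇u)) = 0`, and substituting this into
`0 ≤ ∫_{ℝ^N_+} (N u / 2 + x·∇u)²` gives the inequality.
-/

open Set

section HalfSpace

variable {N : ℕ} (k : Fin N)

lemma setOf_pos_ae_eq_setOf_nonneg :
    {x : Fin N → ℝ | 0 < x k} =ᵐ[volume] {x | 0 ≤ x k} := by
  have : ∀ᵐ x : Fin N → ℝ, x k ≠ 0 := by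
    rw [volume_pi]
    exact Measure.ae_eval_ne _ k 0
  filter_upwards [this] with x hx
  exact propext ⟨le_of_lt, fun h => h.lt_of_ne' hx⟩

lemma setIntegral_setOf_pos_eq_setIntegral_Icc {E : Type*} [NormedAddCommGroup E]
    [NormedSpace ℝ E] {g : (Fin N → ℝ) → E} {B : ℝ} (hg : ∀ x, B < ‖x‖ → g x = 0) :
    ∫ x in {x | 0 < x k}, g x
      = ∫ x in Icc (Function.update (fun _ => -B) k 0) (fun _ => B), g x := by
  have hbox : {x | 0 ≤ x k} ∩ Metric.closedBall 0 B
      ⊆ Icc (Function.update (fun _ => -B) k 0) (fun _ => B) := by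
    rintro x ⟨hxk, hxB⟩
    rw [mem_closedBall_zero_iff] at hxB
    have hcoord : ∀ i, |x i| ≤ B := fun i => (norm_le_pi_norm x i).trans hxB
    refine ⟨fun i => ?_, fun i => (le_abs_self _).trans (hcoord i)⟩
    rcases eq_or_ne i k with rfl | hi
    · simpa using hxk
    · simpa [hi] using neg_le_of_abs_le (hcoord i)
  rw [setIntegral_congr_set (setOf_pos_ae_eq_setOf_nonneg k)]
  refine setIntegral_eq_of_subset_of_forall_sdiff_eq_zero
    (measurableSet_le measurable_const (measurable_pi_apply k))
    (fun x hx => ?_) (fun x ⟨hxk, hx⟩ => hg x ?_)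
  · simpa using hx.1 k
  · by_contra! hxB
    exact hx (hbox ⟨hxk, mem_closedBall_zero_iff.2 hxB⟩)

theorem setIntegral_setOf_pos_divergence_eq_zero {f : Fin N → (Fin N → ℝ) → ℝ}
    (hf : ∀ i, Differentiable ℝ (f i)) (hsupp : ∀ i, HasCompactSupport (f i))
    (hk : ∀ x, x k = 0 → f k x = 0)
    (hint : Integrable fun x => ∑ i, fderiv ℝ (f i) x (Pi.single i 1)) :
    ∫ x in {x | 0 < x k}, ∑ i, fderiv ℝ (f i) x (Pi.single i 1) = 0 := by
  cases N with
  | zero => exact k.elim0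
  | succ n =>
  obtain ⟨R, hR0, hR⟩ : ∃ R, 0 < R ∧ ⋃ i, tsupport (f i) ⊆ Metric.closedBall 0 R :=
    (isCompact_iUnion hsupp).isBounded.subset_closedBall_lt 0 0
  have hnotMem : ∀ i x, R < ‖x‖ → x ∉ tsupport (f i) := fun i x hx hmem => by
    have := mem_closedBall_zero_iff.1 (hR (mem_iUnion_of_mem i hmem))
    linarith
  have hface : ∀ i (y : Fin n → ℝ) c, 2 * R ≤ |c| → f i (Fin.insertNth i c y) = 0 :=
    fun i y c hc => image_eq_zero_of_notMem_tsupport <| hnotMem i _ <| by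
      have := norm_le_pi_norm (Fin.insertNth (α := fun _ => ℝ) i c y) i
      rw [Fin.insertNth_apply_same, Real.norm_eq_abs] at this
      linarith
  rw [setIntegral_setOf_pos_eq_setIntegral_Icc k (B := 2 * R) fun x hx => by
    simp [fderiv_of_notMem_tsupport ℝ (hnotMem _ x (by linarith))]]
  -- The back face of the box in direction `k` lies in `{x k = 0}`, all other faces lie
  -- outside the supports of the `f i`.
  rw [integral_divergence_of_hasFDerivAt_off_countable' _ _
    (fun i => by rcases eq_or_ne i k with rfl | hi <;> simp [*] <;> linarith) f
    (fun i x => fderiv ℝ (f i) x) ∅ countable_empty (fun i => (hf i).continuous.continuousOn)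
    (fun x _ i => (hf i x).hasFDerivAt) hint.integrableOn]
  refine Finset.sum_eq_zero fun i _ => ?_
  have hfront : ∀ y, f i (i.insertNth (2 * R) y) = 0 := fun y =>
    hface i y _ (by simp [abs_of_pos hR0])
  have hback : ∀ y, f i (i.insertNth (Function.update (fun _ => -(2 * R)) k 0 i) y) = 0 :=
    fun y => by
      rcases eq_or_ne i k with rfl | hi
      · exact hk _ (by simp)
      · exact hface i y _ (by simp [hi, abs_of_pos hR0])
  simp [hfront, hback]

end HalfSpace

section RadialDerivative

variable {N : ℕ} {u : EuclideanSpace ℝ (Fin N) → ℝ}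

lemma continuous_radDeriv (hu : ContDiff ℝ 1 u) : Continuous (radDeriv u) :=
  continuous_finsetSum _ fun i _ => (EuclideanSpace.proj i).continuous.mul
    ((hu.continuous_fderiv one_ne_zero).clm_apply continuous_const)

lemma hasCompactSupport_radDeriv (hsupp : HasCompactSupport u) :
    HasCompactSupport (radDeriv u) :=
  hsupp.mono' fun x hx => by
    by_contra h
    simp [radDeriv, pderiv', fderiv_of_notMem_tsupport ℝ h] at hx

lemma memLp_radDeriv (hu : ContDiff ℝ 1 u) (hsupp : HasCompactSupport u) (p : ENNReal) :
    MemLp (radDeriv u) p :=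
  (continuous_radDeriv hu).memLp_of_hasCompactSupport (hasCompactSupport_radDeriv hsupp)

lemma fderiv_comp_toLp_apply_single (i : Fin N) (y : Fin N → ℝ) :
    fderiv ℝ (fun y => u (WithLp.toLp 2 y)) y (Pi.single i 1)
      = pderiv' u i (WithLp.toLp 2 y) := by
  rw [show (fun y => u (WithLp.toLp 2 y)) = u ∘ (EuclideanSpace.equiv (Fin N) ℝ).symm from rfl,
    ContinuousLinearEquiv.comp_right_fderiv]
  rfl

lemma sum_fderiv_coord_mul_sq_apply_single (hu : Differentiable ℝ u) (y : Fin N → ℝ) :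
    ∑ i, fderiv ℝ (fun y : Fin N → ℝ => y i * u (WithLp.toLp 2 y) ^ 2) y (Pi.single i 1)
      = N * u (WithLp.toLp 2 y) ^ 2
        + 2 * (u (WithLp.toLp 2 y) * radDeriv u (WithLp.toLp 2 y)) := by
  have hw : Differentiable ℝ fun y : Fin N → ℝ => u (WithLp.toLp 2 y) :=
    hu.comp (EuclideanSpace.equiv (Fin N) ℝ).symm.differentiable
  have hterm : ∀ i,
      fderiv ℝ (fun y : Fin N → ℝ => y i * u (WithLp.toLp 2 y) ^ 2) y (Pi.single i 1)
        = u (WithLp.toLp 2 y) ^ 2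
          + 2 * (u (WithLp.toLp 2 y) * (y i * pderiv' u i (WithLp.toLp 2 y))) := by
    intro i
    have h : HasFDerivAt (fun y : Fin N → ℝ => y i * u (WithLp.toLp 2 y) ^ 2) _ y :=
      (hasFDerivAt_apply i y).mul ((hw y).hasFDerivAt.pow 2)
    rw [h.fderiv]
    simp only [Nat.add_one_sub_one, pow_one, nsmul_eq_mul, Nat.cast_ofNat,
      add_apply, smul_apply, smul_eq_mul,
      ContinuousLinearMap.proj_apply, Pi.single_eq_same, mul_one, fderiv_comp_toLp_apply_single]
    ring
  simp [hterm, Finset.sum_add_distrib, ← Finset.mul_sum, radDeriv]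

end RadialDerivative

theorem setIntegral_upperHalf_mul_sq_add_mul_radDeriv_eq_zero (N : ℕ) (hN : 0 < N)
    {u : EuclideanSpace ℝ (Fin N) → ℝ} (hu : ContDiff ℝ 1 u) (hsupp : HasCompactSupport u) :
    ∫ x in upperHalf N hN, ((N : ℝ) * u x ^ 2 + 2 * (u x * radDeriv u x)) = 0 := by
  have huL2 : MemLp u 2 := hu.continuous.memLp_of_hasCompactSupport hsupp
  have hint : Integrable fun x => (N : ℝ) * u x ^ 2 + 2 * (u x * radDeriv u x) :=
    (huL2.integrable_sq.const_mul _).add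
      ((huL2.integrable_mul (memLp_radDeriv hu hsupp 2)).const_mul _)
  have hw : Differentiable ℝ fun y : Fin N → ℝ => u (WithLp.toLp 2 y) :=
    (hu.differentiable one_ne_zero).comp (EuclideanSpace.equiv (Fin N) ℝ).symm.differentiable
  have hwsupp : HasCompactSupport fun y : Fin N → ℝ => u (WithLp.toLp 2 y) :=
    hsupp.comp_homeomorph (EuclideanSpace.equiv (Fin N) ℝ).symm.toHomeomorph
  have htoLp := PiLp.volume_preserving_toLp (Fin N)
  have hemb := (MeasurableEquiv.toLp 2 (Fin N → ℝ)).measurableEmbedding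
  have hdiv := sum_fderiv_coord_mul_sq_apply_single (hu.differentiable one_ne_zero)
  rw [← htoLp.setIntegral_preimage_emb hemb]
  simp only [← hdiv]
  refine setIntegral_setOf_pos_divergence_eq_zero (lastIdx N hN)
    (fun i => (differentiable_apply i).mul (hw.pow 2))
    (fun i => (hwsupp.comp_left (g := fun t : ℝ => t ^ 2) (by simp)).mul_left)
    (fun y hy => by simp [hy]) ?_
  simpa only [hdiv, Function.comp_def] using (htoLp.integrable_comp_emb hemb).2 hint

theorem sq_div_four_mul_integral_sq_le_of_integral_eq_zero {α : Type*} [MeasurableSpace α]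
    {μ : Measure α} {f g : α → ℝ} (hf : MemLp f 2 μ) (hg : MemLp g 2 μ) (c : ℝ)
    (h : ∫ x, (c * f x ^ 2 + 2 * (f x * g x)) ∂μ = 0) :
    c ^ 2 / 4 * ∫ x, f x ^ 2 ∂μ ≤ ∫ x, g x ^ 2 ∂μ := by
  have hf2 := hf.integrable_sq
  have hfg : Integrable (fun x => f x * g x) μ := hf.integrable_mul hg
  have hcross : c * ∫ x, f x ^ 2 ∂μ + 2 * ∫ x, f x * g x ∂μ = 0 := by
    rwa [integral_add (hf2.const_mul c) (hfg.const_mul 2), integral_const_mul,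
      integral_const_mul] at h
  have hsq : 0 ≤ ∫ x, (c ^ 2 / 4 * f x ^ 2 + c * (f x * g x) + g x ^ 2) ∂μ :=
    integral_nonneg fun x => (sq_nonneg (c / 2 * f x + g x)).trans_eq (by ring)
  have hpart : Integrable (fun x => c ^ 2 / 4 * f x ^ 2 + c * (f x * g x)) μ :=
    (hf2.const_mul _).add (hfg.const_mul _)
  rw [integral_add hpart hg.integrable_sq, integral_add (hf2.const_mul _) (hfg.const_mul _),
    integral_const_mul, integral_const_mul] at hsq
  linear_combination hsq + c / 2 * hcross

/-- **Hardy-type inequality on the half-space.** -/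
theorem hardy_type_inequality
    (N : ℕ) (hN : 3 ≤ N) (u : EuclideanSpace ℝ (Fin N) → ℝ)
    (hu : ContDiff ℝ 1 u) (hsupp : HasCompactSupport u) :
    (N : ℝ) ^ 2 / 4 * (∫ x in upperHalf N (by omega), u x ^ 2)
      ≤ ∫ x in upperHalf N (by omega), radDeriv u x ^ 2 :=
  sq_div_four_mul_integral_sq_le_of_integral_eq_zero
    ((hu.continuous.memLp_of_hasCompactSupport hsupp).restrict _)
    ((memLp_radDeriv hu hsupp 2).restrict _) _
    (setIntegral_upperHalf_mul_sq_add_mul_radDeriv_eq_zero N _ hu hsupp)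
end
end

section
/- (Lemma 4.3: critical norms of v_ε when N = 3) Let N = 3, ψ(x) = e^{−|x|²/(8√5)}, and v_ε(x) = e^{−|x|²/8} ψ(x) U_ε(x), where U_ε(x) = k_3 (ε/(ε² + |x′|² + (x_3 + √3 ε)²))^{1/2} with k_3 = (√3)^{1/2}. Let K_2 = ∫_{ℝ³_+} U_1(x)^6 dx and K_3 = ∫_{ℝ²} U_1(x′,0)^4 dx′ (both independent of ε when computed with U_ε). Then, as ε → 0⁺: ∫_{ℝ³_+} e^{|x|²/4} v_ε(x)^6 dx = K_2 + O(ε²), and ∫_{ℝ²} e^{|x′|²/4} v_ε(x′,0)^4 dx′ = K_3 + O(ε²|ln ε|). -/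
open MeasureTheory Real Filter Topology Asymptotics

noncomputable section

/-! ### Auxiliary lemmas for Lemma 4.3 -/

namespace Lem43

open Set

abbrev E3 := EuclideanSpace ℝ (Fin 3)
abbrev E2 := EuclideanSpace ℝ (Fin 2)

lemma h3 : (0:ℕ) < 3 := by norm_num

/-- upper half space in dimension 3 -/
abbrev UH : Set E3 := upperHalf 3 h3

lemma normSq'_eq3 (x : E3) : normSq' x = x 0 ^ 2 + x 1 ^ 2 := by
  simp [normSq', Fin.sum_univ_three]

lemma normSq'_nonneg3 (x : E3) : 0 ≤ normSq' x := by
  rw [normSq'_eq3]; positivity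

lemma norm_sq_eq3 (x : E3) : ‖x‖ ^ 2 = normSq' x + x (lastIdx 3 h3) ^ 2 := by
  rw [normSq'_eq3, EuclideanSpace.norm_eq, Real.sq_sqrt (by positivity)]
  simp [Fin.sum_univ_three, lastIdx]

lemma smul_apply3 (c : ℝ) (x : E3) (i : Fin 3) : (c • x) i = c * x i := rfl

lemma normSq'_smul3 (c : ℝ) (x : E3) : normSq' (c • x) = c ^ 2 * normSq' x := by
  rw [normSq'_eq3, normSq'_eq3, smul_apply3, smul_apply3]; ring

/-- the denominator of the instanton -/
def D3 (ε : ℝ) (x : E3) : ℝ := ε ^ 2 + normSq' x + (x (lastIdx 3 h3) + ε * xN0 3) ^ 2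

lemma D3_pos {ε : ℝ} (hε : 0 < ε) (x : E3) : 0 < D3 ε x := by
  unfold D3
  nlinarith [normSq'_nonneg3 x, sq_nonneg (x (lastIdx 3 h3) + ε * xN0 3), sq_nonneg ε, hε]

lemma Ueps_pow_six {ε : ℝ} (hε : 0 < ε) (x : E3) :
    Ueps 3 h3 ε x ^ 6 = kN 3 ^ 6 * (ε / D3 ε x) ^ 3 := by
  have hD := D3_pos hε x
  have ht : (0:ℝ) ≤ ε / D3 ε x := by positivity
  rw [Ueps, mul_pow]
  congr 1
  have h12 : (((3:ℕ):ℝ) - 2) / 2 = (1:ℝ)/2 := by norm_num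
  rw [show ε ^ 2 + normSq' x + (x (lastIdx 3 h3) + ε * xN0 3) ^ 2 = D3 ε x from rfl]
  rw [h12, ← Real.rpow_natCast ((ε / D3 ε x) ^ ((1:ℝ)/2)) 6, ← Real.rpow_mul ht,
    ← Real.rpow_natCast (ε / D3 ε x) 3]
  norm_num

lemma xN0_3_nonneg : 0 ≤ xN0 3 := Real.sqrt_nonneg _

/-- lower bound for the denominator on the upper half space -/
lemma D3_ge {ε : ℝ} (hε : 0 < ε) {x : E3} (hx : x ∈ UH) :
    ε ^ 2 + ‖x‖ ^ 2 ≤ D3 ε x := by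
  have hxl : 0 < x (lastIdx 3 h3) := hx
  have h0 : 0 ≤ ε * xN0 3 := mul_nonneg hε.le xN0_3_nonneg
  rw [norm_sq_eq3]
  unfold D3
  nlinarith [sq_nonneg (x (lastIdx 3 h3))]

lemma D3_scale {ε : ℝ} (hε : 0 < ε) (x : E3) :
    D3 1 (ε⁻¹ • x) = ε⁻¹ ^ 2 * D3 ε x := by
  have hεne : ε ≠ 0 := ne_of_gt hε
  unfold D3
  rw [normSq'_smul3, smul_apply3]
  field_simp

/-- pointwise scaling invariance of `U_ε^6` -/
lemma Ueps_six_scale {ε : ℝ} (hε : 0 < ε) (x : E3) :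
    Ueps 3 h3 ε x ^ 6 = (ε ^ 3)⁻¹ * Ueps 3 h3 1 (ε⁻¹ • x) ^ 6 := by
  have hεne : ε ≠ 0 := ne_of_gt hε
  have hD := D3_pos hε x
  rw [Ueps_pow_six hε, Ueps_pow_six one_pos, D3_scale hε]
  field_simp

lemma mem_UH_smul {ε : ℝ} (hε : 0 < ε) (x : E3) : (ε⁻¹ • x) ∈ UH ↔ x ∈ UH := by
  have : (ε⁻¹ • x) (lastIdx 3 h3) = ε⁻¹ * x (lastIdx 3 h3) := rfl
  constructor
  · intro h
    have h' : 0 < ε⁻¹ * x (lastIdx 3 h3) := h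
    have h2 := mul_pos hε h'
    rwa [← mul_assoc, mul_inv_cancel₀ (ne_of_gt hε), one_mul] at h2
  · intro h
    exact mul_pos (inv_pos.mpr hε) h

lemma continuous_last3 : Continuous fun x : E3 => x (lastIdx 3 h3) :=
  (EuclideanSpace.proj (lastIdx 3 h3)).continuous

lemma measurableSet_UH : MeasurableSet UH :=
  measurableSet_lt measurable_const (continuous_last3.measurable)

lemma continuous_normSq'3 : Continuous fun x : E3 => normSq' x := by
  have : (fun x : E3 => normSq' x) = fun x : E3 => x 0 ^ 2 + x 1 ^ 2 := by
    funext x; exact normSq'_eq3 x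
  rw [this]
  exact (((EuclideanSpace.proj (0 : Fin 3)).continuous).pow 2).add
    (((EuclideanSpace.proj (1 : Fin 3)).continuous).pow 2)

lemma continuous_D3 (ε : ℝ) : Continuous fun x : E3 => D3 ε x := by
  unfold D3
  exact (continuous_const.add continuous_normSq'3).add
    ((continuous_last3.add continuous_const).pow 2)

lemma continuous_Ueps_six {ε : ℝ} (hε : 0 < ε) :
    Continuous fun x : E3 => Ueps 3 h3 ε x ^ 6 := by
  have : (fun x : E3 => Ueps 3 h3 ε x ^ 6)
      = fun x : E3 => kN 3 ^ 6 * (ε / D3 ε x) ^ 3 := by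
    funext x; exact Ueps_pow_six hε x
  rw [this]
  refine continuous_const.mul (Continuous.pow ?_ 3)
  exact continuous_const.div (continuous_D3 ε) fun x => (D3_pos hε x).ne'

/-- key integrable majorant on `E3` -/
lemma integrable_majorant3 {ε : ℝ} (hε : 0 < ε) :
    IntegrableOn (fun x : E3 => (1 + ‖x‖ ^ 2) * Ueps 3 h3 ε x ^ 6) UH := by
  set m : ℝ := min (ε ^ 2) 1 with hm
  have hmpos : 0 < m := lt_min (by positivity) one_pos
  set C : ℝ := kN 3 ^ 6 * (8 * ε ^ 3 / m ^ 3) with hC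
  have hmeas : AEStronglyMeasurable (fun x : E3 => (1 + ‖x‖ ^ 2) * Ueps 3 h3 ε x ^ 6)
      (volume.restrict UH) :=
    ((continuous_const.add (continuous_norm.pow 2)).mul (continuous_Ueps_six hε)).aestronglyMeasurable
  have hint : Integrable (fun x : E3 => C * (1 + ‖x‖) ^ (-4 : ℝ)) (volume.restrict UH) := by
    refine Integrable.const_mul ?_ C
    exact (integrable_one_add_norm (E := E3) (by simp [finrank_euclideanSpace_fin]; norm_num)).restrict
  refine Integrable.mono' hint hmeas ?_
  rw [ae_restrict_iff' measurableSet_UH]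
  refine Filter.Eventually.of_forall fun x hx => ?_
  set t : ℝ := ‖x‖ with htdef
  have ht0 : 0 ≤ t := norm_nonneg x
  have h1t : (0:ℝ) < 1 + t := by linarith
  have hD := D3_pos hε x
  have hDge : ε ^ 2 + t ^ 2 ≤ D3 ε x := D3_ge hε hx
  have hm1 : m * (1 + t ^ 2) ≤ ε ^ 2 + t ^ 2 := by
    have h1 : m ≤ ε ^ 2 := min_le_left _ _
    have h2 : m ≤ 1 := min_le_right _ _
    nlinarith [sq_nonneg t]
  have hsq : (1 + t) ^ 2 ≤ 2 * (1 + t ^ 2) := by nlinarith [sq_nonneg (1 - t)]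
  have hDge2 : m * (1 + t) ^ 2 / 2 ≤ D3 ε x := by nlinarith
  have hstep : ε / D3 ε x ≤ 2 * ε / (m * (1 + t) ^ 2) := by
    rw [div_le_div_iff₀ hD (by positivity)]
    nlinarith [hDge2, hε.le, mul_nonneg (mul_nonneg hmpos.le (sq_nonneg (1+t))) hε.le]
  have hfrac_nonneg : (0:ℝ) ≤ ε / D3 ε x := by positivity
  have hcube : (ε / D3 ε x) ^ 3 ≤ (2 * ε / (m * (1 + t) ^ 2)) ^ 3 :=
    pow_le_pow_left₀ hfrac_nonneg hstep 3
  have hkN : (0:ℝ) ≤ kN 3 ^ 6 := by positivity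
  have hrpow : (1 + t) ^ (-4 : ℝ) = ((1 + t) ^ (4:ℕ))⁻¹ := by
    rw [← Real.rpow_natCast (1 + t) 4, ← Real.rpow_neg h1t.le]
    norm_num
  have hfinal : (1 + t ^ 2) * (kN 3 ^ 6 * (ε / D3 ε x) ^ 3) ≤ C * ((1 + t) ^ (4:ℕ))⁻¹ := by
    have h2 : (1 + t ^ 2) * (kN 3 ^ 6 * (ε / D3 ε x) ^ 3)
        ≤ (1 + t) ^ 2 * (kN 3 ^ 6 * (2 * ε / (m * (1 + t) ^ 2)) ^ 3) := by
      have e1 : 1 + t ^ 2 ≤ (1 + t) ^ 2 := by nlinarith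
      have e2 : kN 3 ^ 6 * (ε / D3 ε x) ^ 3 ≤ kN 3 ^ 6 * (2 * ε / (m * (1 + t) ^ 2)) ^ 3 :=
        mul_le_mul_of_nonneg_left hcube hkN
      have e3 : (0:ℝ) ≤ kN 3 ^ 6 * (ε / D3 ε x) ^ 3 := by positivity
      have e4 : (0:ℝ) ≤ 1 + t ^ 2 := by positivity
      nlinarith [mul_le_mul_of_nonneg_left e2 (show (0:ℝ) ≤ (1+t)^2 by positivity)]
    refine h2.trans (le_of_eq ?_)
    rw [hC]
    field_simp
    ring
  calc ‖(1 + ‖x‖ ^ 2) * Ueps 3 h3 ε x ^ 6‖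
      = (1 + t ^ 2) * (kN 3 ^ 6 * (ε / D3 ε x) ^ 3) := by
        rw [Real.norm_eq_abs, Ueps_pow_six hε, abs_of_nonneg (by positivity)]
    _ ≤ C * ((1 + t) ^ (4:ℕ))⁻¹ := hfinal
    _ = C * (1 + t) ^ (-4 : ℝ) := by rw [hrpow]

lemma integrableOn_Ueps_six {ε : ℝ} (hε : 0 < ε) :
    IntegrableOn (fun x : E3 => Ueps 3 h3 ε x ^ 6) UH := by
  refine (integrable_majorant3 hε).mono' (continuous_Ueps_six hε).aestronglyMeasurable ?_
  refine Filter.Eventually.of_forall fun x => ?_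
  have h1 : (0:ℝ) ≤ Ueps 3 h3 ε x ^ 6 := by
    rw [Ueps_pow_six hε]
    have := D3_pos hε x
    positivity
  rw [Real.norm_eq_abs, abs_of_nonneg h1]
  nlinarith [sq_nonneg ‖x‖, h1]

lemma integrableOn_weighted3 {ε : ℝ} (hε : 0 < ε) :
    IntegrableOn (fun x : E3 => ‖x‖ ^ 2 * Ueps 3 h3 ε x ^ 6) UH := by
  refine (integrable_majorant3 hε).mono'
    ((continuous_norm.pow 2).mul (continuous_Ueps_six hε)).aestronglyMeasurable ?_
  refine Filter.Eventually.of_forall fun x => ?_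
  have h1 : (0:ℝ) ≤ Ueps 3 h3 ε x ^ 6 := by
    rw [Ueps_pow_six hε]
    have := D3_pos hε x
    positivity
  rw [Real.norm_eq_abs, abs_of_nonneg (by positivity)]
  nlinarith [sq_nonneg ‖x‖, h1]

lemma setIntegral_Ueps_six_scale {ε : ℝ} (hε : 0 < ε) :
    ∫ x in UH, Ueps 3 h3 ε x ^ 6 = ∫ x in UH, Ueps 3 h3 1 x ^ 6 := by
  rw [← integral_indicator measurableSet_UH, ← integral_indicator measurableSet_UH]
  have hfun : UH.indicator (fun x : E3 => Ueps 3 h3 ε x ^ 6)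
      = fun x : E3 => (ε ^ 3)⁻¹ • UH.indicator (fun y : E3 => Ueps 3 h3 1 y ^ 6) (ε⁻¹ • x) := by
    funext x
    by_cases hx : x ∈ UH
    · rw [Set.indicator_of_mem hx, Set.indicator_of_mem ((mem_UH_smul hε x).mpr hx),
        Ueps_six_scale hε x, smul_eq_mul]
    · rw [Set.indicator_of_notMem hx,
        Set.indicator_of_notMem (fun h => hx ((mem_UH_smul hε x).mp h)), smul_zero]
  rw [hfun, integral_smul,
    MeasureTheory.Measure.integral_comp_inv_smul_of_nonneg volume
      (UH.indicator fun y : E3 => Ueps 3 h3 1 y ^ 6) hε.le,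
    finrank_euclideanSpace_fin, smul_smul, inv_mul_cancel₀ (by positivity), one_smul]

lemma setIntegral_weighted3_scale {ε : ℝ} (hε : 0 < ε) :
    ∫ x in UH, ‖x‖ ^ 2 * Ueps 3 h3 ε x ^ 6
      = ε ^ 2 * ∫ x in UH, ‖x‖ ^ 2 * Ueps 3 h3 1 x ^ 6 := by
  rw [← integral_indicator measurableSet_UH, ← integral_indicator measurableSet_UH]
  have hfun : UH.indicator (fun x : E3 => ‖x‖ ^ 2 * Ueps 3 h3 ε x ^ 6)
      = fun x : E3 => ((ε ^ 3)⁻¹ * ε ^ 2) •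
          UH.indicator (fun y : E3 => ‖y‖ ^ 2 * Ueps 3 h3 1 y ^ 6) (ε⁻¹ • x) := by
    funext x
    by_cases hx : x ∈ UH
    · rw [Set.indicator_of_mem hx, Set.indicator_of_mem ((mem_UH_smul hε x).mpr hx),
        smul_eq_mul]
      have hn : ‖ε⁻¹ • x‖ = ε⁻¹ * ‖x‖ := by
        rw [norm_smul, Real.norm_eq_abs, abs_of_pos (inv_pos.mpr hε)]
      rw [Ueps_six_scale hε x, hn]
      field_simp
    · rw [Set.indicator_of_notMem hx,
        Set.indicator_of_notMem (fun h => hx ((mem_UH_smul hε x).mp h)), smul_zero]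
  rw [hfun, integral_smul,
    MeasureTheory.Measure.integral_comp_inv_smul_of_nonneg volume
      (UH.indicator fun y : E3 => ‖y‖ ^ 2 * Ueps 3 h3 1 y ^ 6) hε.le,
    finrank_euclideanSpace_fin, smul_smul, smul_eq_mul]
  field_simp

/-- the exponent coefficient for the interior term -/
def aconst : ℝ := 1/2 + 3/(4 * Real.sqrt 5)

lemma aconst_nonneg : 0 ≤ aconst := by
  have : (0:ℝ) < Real.sqrt 5 := Real.sqrt_pos.mpr (by norm_num)
  unfold aconst
  positivity

lemma veps_eq (ε : ℝ) (x : E3) :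
    veps ε x = Real.exp (-‖x‖ ^ 2 / 8) * psi3 x * Ueps 3 h3 ε x := rfl

lemma weight_pt (ε : ℝ) (x : E3) :
    Kw x * veps ε x ^ 6 = Real.exp (-(aconst * ‖x‖ ^ 2)) * Ueps 3 h3 ε x ^ 6 := by
  have h5 : (0:ℝ) < Real.sqrt 5 := Real.sqrt_pos.mpr (by norm_num)
  rw [veps_eq, Kw, psi3]
  have step : Real.exp (‖x‖ ^ 2 / 4) *
      (Real.exp (-‖x‖ ^ 2 / 8) * Real.exp (-‖x‖ ^ 2 / (8 * Real.sqrt 5)) * Ueps 3 h3 ε x) ^ 6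
      = (Real.exp (‖x‖ ^ 2 / 4) * Real.exp (-‖x‖ ^ 2 / 8) ^ 6 *
          Real.exp (-‖x‖ ^ 2 / (8 * Real.sqrt 5)) ^ 6) * Ueps 3 h3 ε x ^ 6 := by ring
  rw [step, ← Real.exp_nat_mul, ← Real.exp_nat_mul, ← Real.exp_add, ← Real.exp_add]
  congr 2
  rw [aconst]
  field_simp
  ring

/-- the finite weighted integral of the standard bubble -/
def Mconst : ℝ := ∫ x in UH, ‖x‖ ^ 2 * Ueps 3 h3 1 x ^ 6

lemma Mconst_nonneg : 0 ≤ Mconst :=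
  setIntegral_nonneg measurableSet_UH fun x _ => by positivity

lemma norm_Ueps_six {ε : ℝ} (hε : 0 < ε) (x : E3) : 0 ≤ Ueps 3 h3 ε x ^ 6 := by positivity

/-- **Main estimate for part 1.** -/
lemma part1 {ε : ℝ} (hε : 0 < ε) :
    |(∫ x in UH, Kw x * veps ε x ^ 6) - K2const| ≤ (aconst * Mconst) * ε ^ 2 := by
  set g : E3 → ℝ := fun x => Ueps 3 h3 ε x ^ 6 with hgdef
  set f : E3 → ℝ := fun x => Real.exp (-(aconst * ‖x‖ ^ 2)) * Ueps 3 h3 ε x ^ 6 with hfdef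
  set m : E3 → ℝ := fun x => aconst * (‖x‖ ^ 2 * Ueps 3 h3 ε x ^ 6) with hmdef
  have hg : IntegrableOn g UH := integrableOn_Ueps_six hε
  have hcontf : Continuous f :=
    ((continuous_const.mul (continuous_norm.pow 2)).neg.rexp).mul (continuous_Ueps_six hε)
  have hexp_le_one : ∀ x : E3, Real.exp (-(aconst * ‖x‖ ^ 2)) ≤ 1 := fun x =>
    Real.exp_le_one_iff.mpr (by nlinarith [aconst_nonneg, sq_nonneg ‖x‖])
  have hexp_nonneg : ∀ x : E3, 0 ≤ Real.exp (-(aconst * ‖x‖ ^ 2)) := fun x => (Real.exp_pos _).le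
  have hf_le_g : ∀ x : E3, f x ≤ g x := fun x => by
    have h1 := norm_Ueps_six hε x
    have := hexp_le_one x
    simp only [hfdef, hgdef]
    nlinarith
  have hf_nonneg : ∀ x : E3, 0 ≤ f x := fun x =>
    mul_nonneg (hexp_nonneg x) (norm_Ueps_six hε x)
  have hf : IntegrableOn f UH := by
    refine hg.mono' hcontf.aestronglyMeasurable ?_
    exact Filter.Eventually.of_forall fun x => by
      rw [Real.norm_eq_abs, abs_of_nonneg (hf_nonneg x)]; exact hf_le_g x
  have hm : IntegrableOn m UH := (integrableOn_weighted3 hε).const_mul aconst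
  have hK0 : K2const = ∫ x in UH, g x := (setIntegral_Ueps_six_scale hε).symm
  have hKw : (∫ x in UH, Kw x * veps ε x ^ 6) = ∫ x in UH, f x :=
    integral_congr_ae (Filter.Eventually.of_forall fun x => weight_pt ε x)
  rw [hKw, hK0]
  have hle : (∫ x in UH, f x) ≤ ∫ x in UH, g x :=
    integral_mono hf hg hf_le_g
  rw [abs_sub_comm, abs_of_nonneg (by linarith)]
  have hsub : (∫ x in UH, g x) - ∫ x in UH, f x = ∫ x in UH, (g x - f x) :=
    (integral_sub hg hf).symm
  rw [hsub]
  have hmono : (∫ x in UH, (g x - f x)) ≤ ∫ x in UH, m x := by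
    refine integral_mono_of_nonneg (Filter.Eventually.of_forall fun x => ?_) hm
      (Filter.Eventually.of_forall fun x => ?_)
    · exact sub_nonneg.mpr (hf_le_g x)
    · have h1 := norm_Ueps_six hε x
      have h2 : 1 - Real.exp (-(aconst * ‖x‖ ^ 2)) ≤ aconst * ‖x‖ ^ 2 := by
        have := Real.add_one_le_exp (-(aconst * ‖x‖ ^ 2))
        linarith
      have h3 : 0 ≤ aconst * ‖x‖ ^ 2 := by nlinarith [aconst_nonneg, sq_nonneg ‖x‖]
      simp only [hgdef, hfdef, hmdef]
      nlinarith
  refine hmono.trans ?_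
  have : (∫ x in UH, m x) = aconst * ∫ x in UH, ‖x‖ ^ 2 * Ueps 3 h3 ε x ^ 6 :=
    MeasureTheory.integral_const_mul aconst _
  rw [this, setIntegral_weighted3_scale hε, ← Mconst]
  exact le_of_eq (by ring)

/-! ### Boundary (2D) lemmas -/

lemma pad_apply (x' : E2) (i : Fin 3) :
    pad 3 x' i = if h : (i:ℕ) < 2 then x' ⟨i, h⟩ else 0 := rfl

lemma pad_last (x' : E2) : pad 3 x' (lastIdx 3 h3) = 0 := rfl

lemma normSq'_pad (x' : E2) : normSq' (pad 3 x') = ‖x'‖ ^ 2 := by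
  simp [normSq', Fin.sum_univ_three, EuclideanSpace.norm_eq, pad_apply]
  rw [Real.sq_sqrt (by positivity)]

lemma norm_pad_sq (x' : E2) : ‖pad 3 x'‖ ^ 2 = ‖x'‖ ^ 2 := by
  rw [EuclideanSpace.norm_eq, Real.sq_sqrt (by positivity)]
  simp [Fin.sum_univ_three, pad_apply, EuclideanSpace.norm_eq]
  rw [Real.sq_sqrt (by positivity)]

lemma xN0_3_sq : xN0 3 ^ 2 = 3 := by
  rw [xN0]
  norm_num [Real.sq_sqrt]

lemma Ueps_pad_pow_four {ε : ℝ} (hε : 0 < ε) (x' : E2) :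
    Ueps 3 h3 ε (pad 3 x') ^ 4 = kN 3 ^ 4 * (ε ^ 2 / (4 * ε ^ 2 + ‖x'‖ ^ 2) ^ 2) := by
  have hden : (0:ℝ) < 4 * ε ^ 2 + ‖x'‖ ^ 2 := by positivity
  have hbase : ε ^ 2 + normSq' (pad 3 x') + (pad 3 x' (lastIdx 3 h3) + ε * xN0 3) ^ 2
      = 4 * ε ^ 2 + ‖x'‖ ^ 2 := by
    rw [normSq'_pad, pad_last]
    have : (0 + ε * xN0 3) ^ 2 = ε ^ 2 * 3 := by
      rw [zero_add, mul_pow, xN0_3_sq]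
    rw [this]; ring
  have ht : (0:ℝ) ≤ ε / (4 * ε ^ 2 + ‖x'‖ ^ 2) := by positivity
  rw [Ueps, hbase, mul_pow]
  congr 1
  have h12 : (((3:ℕ):ℝ) - 2) / 2 = (1:ℝ)/2 := by norm_num
  rw [h12, ← Real.rpow_natCast ((ε / (4 * ε ^ 2 + ‖x'‖ ^ 2)) ^ ((1:ℝ)/2)) 4,
    ← Real.rpow_mul ht]
  have h2 : (1/2 * ((4:ℕ):ℝ)) = (2:ℝ) := by norm_num
  rw [h2, Real.rpow_two, div_pow]

/-- the exponent coefficient for the boundary term -/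
def bconst : ℝ := 1/4 + 1/(2 * Real.sqrt 5)

lemma bconst_nonneg : 0 ≤ bconst := by
  have : (0:ℝ) < Real.sqrt 5 := Real.sqrt_pos.mpr (by norm_num)
  unfold bconst
  positivity

lemma weight_pt_bd (ε : ℝ) (x' : E2) :
    Real.exp (‖x'‖ ^ 2 / 4) * veps ε (pad 3 x') ^ 4
      = Real.exp (-(bconst * ‖x'‖ ^ 2)) * Ueps 3 h3 ε (pad 3 x') ^ 4 := by
  have h5 : (0:ℝ) < Real.sqrt 5 := Real.sqrt_pos.mpr (by norm_num)
  rw [veps_eq, psi3, norm_pad_sq]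
  have step : Real.exp (‖x'‖ ^ 2 / 4) *
      (Real.exp (-‖x'‖ ^ 2 / 8) * Real.exp (-‖x'‖ ^ 2 / (8 * Real.sqrt 5))
        * Ueps 3 h3 ε (pad 3 x')) ^ 4
      = (Real.exp (‖x'‖ ^ 2 / 4) * Real.exp (-‖x'‖ ^ 2 / 8) ^ 4 *
          Real.exp (-‖x'‖ ^ 2 / (8 * Real.sqrt 5)) ^ 4) * Ueps 3 h3 ε (pad 3 x') ^ 4 := by
    ring
  rw [step, ← Real.exp_nat_mul, ← Real.exp_nat_mul, ← Real.exp_add, ← Real.exp_add]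
  congr 2
  rw [bconst]
  field_simp
  ring

lemma continuous_U4 {ε : ℝ} (hε : 0 < ε) :
    Continuous fun x' : E2 => Ueps 3 h3 ε (pad 3 x') ^ 4 := by
  have heq : (fun x' : E2 => Ueps 3 h3 ε (pad 3 x') ^ 4)
      = fun x' : E2 => kN 3 ^ 4 * (ε ^ 2 / (4 * ε ^ 2 + ‖x'‖ ^ 2) ^ 2) := by
    funext x'; exact Ueps_pad_pow_four hε x'
  rw [heq]
  refine continuous_const.mul (continuous_const.div ?_ fun x => by positivity)
  exact ((continuous_const.add (continuous_norm.pow 2)).pow 2)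

lemma U4_nonneg {ε : ℝ} (hε : 0 < ε) (x' : E2) : 0 ≤ Ueps 3 h3 ε (pad 3 x') ^ 4 := by
  positivity

lemma integrable_U4 {ε : ℝ} (hε : 0 < ε) :
    Integrable fun x' : E2 => Ueps 3 h3 ε (pad 3 x') ^ 4 := by
  set m : ℝ := min (4 * ε ^ 2) 1 with hm
  have hmpos : 0 < m := lt_min (by positivity) one_pos
  set C : ℝ := kN 3 ^ 4 * (4 * ε ^ 2 / m ^ 2) with hC
  have hint : Integrable (fun x : E2 => C * (1 + ‖x‖) ^ (-4 : ℝ)) := by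
    refine Integrable.const_mul ?_ C
    exact integrable_one_add_norm (E := E2) (by simp [finrank_euclideanSpace_fin]; norm_num)
  refine hint.mono' (continuous_U4 hε).aestronglyMeasurable ?_
  refine Filter.Eventually.of_forall fun x => ?_
  set t : ℝ := ‖x‖ with htdef
  have ht0 : 0 ≤ t := norm_nonneg x
  have h1t : (0:ℝ) < 1 + t := by linarith
  rw [Real.norm_eq_abs, abs_of_nonneg (U4_nonneg hε x), Ueps_pad_pow_four hε]
  have hrpow : (1 + t) ^ (-4 : ℝ) = ((1 + t) ^ (4:ℕ))⁻¹ := by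
    rw [← Real.rpow_natCast (1 + t) 4, ← Real.rpow_neg h1t.le]
    norm_num
  rw [hrpow]
  have hm1 : m * (1 + t ^ 2) ≤ 4 * ε ^ 2 + t ^ 2 := by
    have h1 : m ≤ 4 * ε ^ 2 := min_le_left _ _
    have h2 : m ≤ 1 := min_le_right _ _
    nlinarith [sq_nonneg t]
  have hsq : (1 + t) ^ 2 ≤ 2 * (1 + t ^ 2) := by nlinarith [sq_nonneg (1 - t)]
  have hd : m * (1 + t) ^ 2 / 2 ≤ 4 * ε ^ 2 + t ^ 2 := by nlinarith
  have hdpos : (0:ℝ) < 4 * ε ^ 2 + t ^ 2 := by positivity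
  have key : ε ^ 2 / (4 * ε ^ 2 + t ^ 2) ^ 2 ≤ (4 * ε ^ 2 / m ^ 2) * ((1 + t) ^ (4:ℕ))⁻¹ := by
    have h4 : (m * (1 + t) ^ 2 / 2) ^ 2 ≤ (4 * ε ^ 2 + t ^ 2) ^ 2 := by
      apply pow_le_pow_left₀ (by positivity) hd
    have h5 : (0:ℝ) < (m * (1 + t) ^ 2 / 2) ^ 2 := by positivity
    calc ε ^ 2 / (4 * ε ^ 2 + t ^ 2) ^ 2
        ≤ ε ^ 2 / (m * (1 + t) ^ 2 / 2) ^ 2 := by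
          apply div_le_div_of_nonneg_left (by positivity) h5 h4
      _ = (4 * ε ^ 2 / m ^ 2) * ((1 + t) ^ (4:ℕ))⁻¹ := by
          field_simp
          ring
  calc kN 3 ^ 4 * (ε ^ 2 / (4 * ε ^ 2 + t ^ 2) ^ 2)
      ≤ kN 3 ^ 4 * ((4 * ε ^ 2 / m ^ 2) * ((1 + t) ^ (4:ℕ))⁻¹) :=
        mul_le_mul_of_nonneg_left key (by positivity)
    _ = C * ((1 + t) ^ (4:ℕ))⁻¹ := by rw [hC]; ring

lemma int_bd_scale {ε : ℝ} (hε : 0 < ε) :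
    (∫ x' : E2, Ueps 3 h3 ε (pad 3 x') ^ 4) = ∫ x' : E2, Ueps 3 h3 1 (pad 3 x') ^ 4 := by
  have hfun : (fun x' : E2 => Ueps 3 h3 ε (pad 3 x') ^ 4)
      = fun x' : E2 => (ε ^ 2)⁻¹ • (fun y : E2 => Ueps 3 h3 1 (pad 3 y) ^ 4) (ε⁻¹ • x') := by
    funext x'
    have hn : ‖ε⁻¹ • x'‖ = ε⁻¹ * ‖x'‖ := by
      rw [norm_smul, Real.norm_eq_abs, abs_of_pos (inv_pos.mpr hε)]
    simp only
    rw [Ueps_pad_pow_four hε, Ueps_pad_pow_four one_pos, hn, smul_eq_mul]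
    have hd : (0:ℝ) < 4 * ε ^ 2 + ‖x'‖ ^ 2 := by positivity
    field_simp
  rw [hfun, integral_smul,
    MeasureTheory.Measure.integral_comp_inv_smul_of_nonneg volume
      (fun y : E2 => Ueps 3 h3 1 (pad 3 y) ^ 4) hε.le,
    finrank_euclideanSpace_fin, smul_smul, inv_mul_cancel₀ (by positivity), one_smul]

/-- near-origin majorant -/
def g1 (ε : ℝ) : E2 → ℝ :=
  Set.indicator (Metric.closedBall (0:E2) 1) (fun x => (4 * ε ^ 2 + ‖x‖ ^ 2)⁻¹)

/-- far-field majorant -/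
def g2 : E2 → ℝ :=
  Set.indicator (Metric.closedBall (0:E2) 1)ᶜ (fun x => ((‖x‖ ^ 2) ^ 2)⁻¹)

lemma g1_nonneg (ε : ℝ) (x : E2) : 0 ≤ g1 ε x :=
  Set.indicator_nonneg (fun y _ => by positivity) x

lemma g2_nonneg (x : E2) : 0 ≤ g2 x :=
  Set.indicator_nonneg (fun y _ => by positivity) x

lemma integrable_g1 {ε : ℝ} (hε : 0 < ε) : Integrable (g1 ε) := by
  have hcont : Continuous fun x : E2 => (4 * ε ^ 2 + ‖x‖ ^ 2)⁻¹ := by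
    refine Continuous.inv₀ (continuous_const.add (continuous_norm.pow 2)) fun x => by positivity
  have : IntegrableOn (fun x : E2 => (4 * ε ^ 2 + ‖x‖ ^ 2)⁻¹) (Metric.closedBall 0 1) :=
    hcont.continuousOn.integrableOn_compact (isCompact_closedBall _ _)
  exact this.integrable_indicator (measurableSet_closedBall)

lemma integrable_g2 : Integrable g2 := by
  have hint : Integrable (fun x : E2 => (16:ℝ) * (1 + ‖x‖) ^ (-4 : ℝ)) := by
    refine Integrable.const_mul ?_ 16
    exact integrable_one_add_norm (E := E2) (by simp [finrank_euclideanSpace_fin]; norm_num)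
  have hmeas : AEStronglyMeasurable g2 (volume : Measure E2) := by
    refine (Measurable.indicator ?_ measurableSet_closedBall.compl).aestronglyMeasurable
    exact ((measurable_norm.pow_const 2).pow_const 2).inv
  refine hint.mono' hmeas ?_
  refine Filter.Eventually.of_forall fun x => ?_
  set t : ℝ := ‖x‖ with htdef
  have ht0 : 0 ≤ t := norm_nonneg x
  have h1t : (0:ℝ) < 1 + t := by linarith
  have hrpow : (1 + t) ^ (-4 : ℝ) = ((1 + t) ^ (4:ℕ))⁻¹ := by
    rw [← Real.rpow_natCast (1 + t) 4, ← Real.rpow_neg h1t.le]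
    norm_num
  rw [Real.norm_eq_abs, abs_of_nonneg (g2_nonneg x), hrpow]
  by_cases hx : x ∈ (Metric.closedBall (0:E2) 1)ᶜ
  · rw [g2, Set.indicator_of_mem hx]
    have h1 : 1 < t := by
      have := hx
      simp only [Set.mem_compl_iff, Metric.mem_closedBall, dist_zero_right, not_le] at this
      exact this
    have hb : (1 + t) ^ (4:ℕ) ≤ (2 * t) ^ (4:ℕ) :=
      pow_le_pow_left₀ (by linarith) (by linarith) 4
    have h2 : (1 + t) ^ (4:ℕ) ≤ 16 * (t ^ 2) ^ 2 := by nlinarith [hb]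
    have h3 : (0:ℝ) < (t ^ 2) ^ 2 := by positivity
    have h4 : (0:ℝ) < (1 + t) ^ (4:ℕ) := by positivity
    rw [inv_eq_one_div, inv_eq_one_div, mul_one_div, div_le_div_iff₀ h3 h4]
    nlinarith
  · rw [g2, Set.indicator_of_notMem hx]
    positivity

/-- area constant: volume of the unit disc -/
def Vb2 : ℝ := (volume (Metric.ball (0:E2) 1)).toReal

lemma Vb2_nonneg : 0 ≤ Vb2 := ENNReal.toReal_nonneg

lemma g1_integral_eq {ε : ℝ} (hε : 0 < ε) :
    (∫ x : E2, g1 ε x)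
      = 2 * Vb2 * ((Real.log (4 * ε ^ 2 + 1) - Real.log (4 * ε ^ 2)) / 2) := by
  set fr : ℝ → ℝ := Set.indicator (Icc 0 1) (fun t => (4 * ε ^ 2 + t ^ 2)⁻¹) with hfr
  have heq : (fun x : E2 => g1 ε x) = fun x : E2 => fr ‖x‖ := by
    funext x
    by_cases hx : x ∈ Metric.closedBall (0:E2) 1
    · have h1 : ‖x‖ ≤ 1 := by simpa [dist_zero_right] using hx
      rw [g1, Set.indicator_of_mem hx, hfr,
        Set.indicator_of_mem (Set.mem_Icc.mpr ⟨norm_nonneg x, h1⟩)]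
    · have hx' : 1 < ‖x‖ := by
        simpa [dist_zero_right, not_le] using hx
      have h1 : ¬ (‖x‖ ∈ Icc (0:ℝ) 1) := fun h => absurd h.2 (not_le.mpr hx')
      rw [g1, Set.indicator_of_notMem hx, hfr, Set.indicator_of_notMem h1]
  rw [heq, integral_fun_norm_addHaar (volume : Measure E2) fr]
  rw [finrank_euclideanSpace_fin]
  have hsmul : (∫ y in Ioi (0:ℝ), y ^ (2 - 1) • fr y)
      = ∫ y in Ioi (0:ℝ), Set.indicator (Icc 0 1) (fun t => t * (4 * ε ^ 2 + t ^ 2)⁻¹) y := by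
    refine integral_congr_ae (Filter.Eventually.of_forall fun y => ?_)
    simp only [smul_eq_mul]
    norm_num
    by_cases hy : y ∈ Icc (0:ℝ) 1
    · rw [hfr, Set.indicator_of_mem hy, Set.indicator_of_mem hy]
    · rw [hfr, Set.indicator_of_notMem hy, Set.indicator_of_notMem hy, mul_zero]
  rw [hsmul, setIntegral_indicator measurableSet_Icc]
  have hset : Ioi (0:ℝ) ∩ Icc 0 1 = Ioc 0 1 := by
    ext y
    simp only [mem_inter_iff, mem_Ioi, mem_Icc, mem_Ioc]
    constructor
    · rintro ⟨a, b, c⟩; exact ⟨a, c⟩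
    · rintro ⟨a, b⟩; exact ⟨a, a.le, b⟩
  rw [hset]
  have hIoc : (∫ y in Ioc (0:ℝ) 1, y * (4 * ε ^ 2 + y ^ 2)⁻¹)
      = ∫ y in (0:ℝ)..1, y * (4 * ε ^ 2 + y ^ 2)⁻¹ :=
    (intervalIntegral.integral_of_le zero_le_one).symm
  rw [hIoc]
  have hftc : (∫ y in (0:ℝ)..1, y * (4 * ε ^ 2 + y ^ 2)⁻¹)
      = Real.log (4 * ε ^ 2 + 1 ^ 2) / 2 - Real.log (4 * ε ^ 2 + 0 ^ 2) / 2 := by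
    refine intervalIntegral.integral_eq_sub_of_hasDerivAt
      (f := fun t => Real.log (4 * ε ^ 2 + t ^ 2) / 2) (fun y _ => ?_) ?_
    · have hne : (4 * ε ^ 2 + y ^ 2) ≠ 0 := by positivity
      have h1 : HasDerivAt (fun t : ℝ => 4 * ε ^ 2 + t ^ 2) (2 * y) y := by
        simpa using (hasDerivAt_pow 2 y).const_add (4 * ε ^ 2)
      have h2 : HasDerivAt (fun t : ℝ => Real.log (4 * ε ^ 2 + t ^ 2))
          ((2 * y) / (4 * ε ^ 2 + y ^ 2)) y := h1.log hne
      have h3 := h2.div_const 2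
      refine h3.congr_deriv ?_
      ring
    · apply Continuous.intervalIntegrable
      exact continuous_id.mul (Continuous.inv₀
        (continuous_const.add (continuous_pow 2)) fun t => by positivity)
  rw [hftc]
  simp only [smul_eq_mul, nsmul_eq_mul]
  norm_num [Vb2]
  simp only [measureReal_def]
  norm_num
  ring

lemma one_le_two_abs_log {ε : ℝ} (hε : 0 < ε) (hε2 : ε ≤ 1/2) :
    (1:ℝ) ≤ 2 * |Real.log ε| ∧ Real.log 2 ≤ |Real.log ε| := by
  have hltone : ε < 1 := by linarith
  have hlogabs : |Real.log ε| = -Real.log ε := abs_of_neg (Real.log_neg hε hltone)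
  have h5 : Real.log 2 ≤ |Real.log ε| := by
    rw [hlogabs]
    have hmono : Real.log ε ≤ Real.log (1/2) := Real.log_le_log hε hε2
    have : Real.log ((1:ℝ)/2) = -Real.log 2 := by
      rw [show (1:ℝ)/2 = 2⁻¹ by norm_num, Real.log_inv]
    linarith
  refine ⟨?_, h5⟩
  nlinarith [Real.log_two_gt_d9]

lemma g1_integral_le {ε : ℝ} (hε : 0 < ε) (hε2 : ε ≤ 1/2) :
    (∫ x : E2, g1 ε x) ≤ Vb2 * (4 * |Real.log ε|) := by
  rw [g1_integral_eq hε]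
  obtain ⟨h6, h5⟩ := one_le_two_abs_log hε hε2
  have hltone : ε < 1 := by linarith
  have hlogabs : |Real.log ε| = -Real.log ε := abs_of_neg (Real.log_neg hε hltone)
  have h1 : Real.log (4 * ε ^ 2 + 1) ≤ 1 := by
    have ha : 4 * ε ^ 2 + 1 ≤ 2 := by nlinarith
    have hb := Real.log_le_log (by positivity) ha
    have hc := Real.log_two_lt_d9
    linarith
  have h2 : Real.log (4 * ε ^ 2) = Real.log 4 + 2 * Real.log ε := by
    rw [show (4:ℝ) * ε ^ 2 = 4 * ε ^ 2 from rfl, Real.log_mul (by norm_num) (by positivity),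
      Real.log_pow]
    norm_num
  have h4 : 0 ≤ Real.log 4 := Real.log_nonneg (by norm_num)
  have hinner : Real.log (4 * ε ^ 2 + 1) - Real.log (4 * ε ^ 2) ≤ 4 * |Real.log ε| := by
    rw [h2, hlogabs]
    have : -Real.log ε = |Real.log ε| := hlogabs.symm
    nlinarith [h6, abs_nonneg (Real.log ε)]
  nlinarith [Vb2_nonneg, abs_nonneg (Real.log ε), hinner]

/-- the far-field constant -/
def C2 : ℝ := ∫ x : E2, g2 x

lemma C2_nonneg : 0 ≤ C2 := integral_nonneg g2_nonneg

/-- the big constant for part 2 -/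
def Cfin : ℝ := kN 3 ^ 4 * (bconst * (4 * Vb2) + 2 * C2)

/-- **Main estimate for part 2.** -/
lemma part2 {ε : ℝ} (hε : 0 < ε) (hε2 : ε ≤ 1/2) :
    |(∫ x' : E2, Real.exp (‖x'‖ ^ 2 / 4) * veps ε (pad 3 x') ^ 4) - K3const|
      ≤ Cfin * (ε ^ 2 * |Real.log ε|) := by
  set g : E2 → ℝ := fun x' => Ueps 3 h3 ε (pad 3 x') ^ 4 with hgdef
  set f : E2 → ℝ := fun x' => Real.exp (-(bconst * ‖x'‖ ^ 2)) * Ueps 3 h3 ε (pad 3 x') ^ 4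
    with hfdef
  set m : E2 → ℝ := fun x' => kN 3 ^ 4 * ε ^ 2 * (bconst * g1 ε x' + g2 x') with hmdef
  have hg : Integrable g := integrable_U4 hε
  have hcontf : Continuous f :=
    ((continuous_const.mul (continuous_norm.pow 2)).neg.rexp).mul (continuous_U4 hε)
  have hexp_le_one : ∀ x : E2, Real.exp (-(bconst * ‖x‖ ^ 2)) ≤ 1 := fun x =>
    Real.exp_le_one_iff.mpr (by nlinarith [bconst_nonneg, sq_nonneg ‖x‖])
  have hexp_nonneg : ∀ x : E2, 0 ≤ Real.exp (-(bconst * ‖x‖ ^ 2)) := fun x =>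
    (Real.exp_pos _).le
  have hf_le_g : ∀ x : E2, f x ≤ g x := fun x => by
    have h1 := U4_nonneg hε x
    have := hexp_le_one x
    simp only [hfdef, hgdef]
    nlinarith
  have hf_nonneg : ∀ x : E2, 0 ≤ f x := fun x =>
    mul_nonneg (hexp_nonneg x) (U4_nonneg hε x)
  have hf : Integrable f := by
    refine hg.mono' hcontf.aestronglyMeasurable ?_
    exact Filter.Eventually.of_forall fun x => by
      rw [Real.norm_eq_abs, abs_of_nonneg (hf_nonneg x)]; exact hf_le_g x
  have hm : Integrable m :=
    ((((integrable_g1 hε).const_mul bconst).add integrable_g2).const_mul (kN 3 ^ 4 * ε ^ 2))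
  have hK0 : K3const = ∫ x' : E2, g x' := (int_bd_scale hε).symm
  have hKw : (∫ x' : E2, Real.exp (‖x'‖ ^ 2 / 4) * veps ε (pad 3 x') ^ 4) = ∫ x' : E2, f x' :=
    integral_congr_ae (Filter.Eventually.of_forall fun x => weight_pt_bd ε x)
  rw [hKw, hK0]
  have hle : (∫ x : E2, f x) ≤ ∫ x : E2, g x := integral_mono hf hg hf_le_g
  rw [abs_sub_comm, abs_of_nonneg (by linarith)]
  rw [(integral_sub hg hf).symm]
  -- pointwise bound by m
  have hgf_le_m : ∀ x : E2, g x - f x ≤ m x := by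
    intro x
    set t : ℝ := ‖x‖ with htdef
    have ht0 : 0 ≤ t := norm_nonneg x
    set d : ℝ := 4 * ε ^ 2 + t ^ 2 with hddef
    have hd : (0:ℝ) < d := by positivity
    have hs0 : 0 ≤ bconst * t ^ 2 := by nlinarith [bconst_nonneg, sq_nonneg t]
    have hexp1 : 1 - Real.exp (-(bconst * t ^ 2)) ≤ bconst * t ^ 2 := by
      have := Real.add_one_le_exp (-(bconst * t ^ 2))
      linarith
    have hexp2 : 1 - Real.exp (-(bconst * t ^ 2)) ≤ 1 := by
      have := hexp_nonneg x
      simp only [← htdef] at this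
      linarith
    have hexp3 : 0 ≤ 1 - Real.exp (-(bconst * t ^ 2)) := by
      have := hexp_le_one x
      simp only [← htdef] at this
      linarith
    have hgval : g x = kN 3 ^ 4 * (ε ^ 2 / d ^ 2) := Ueps_pad_pow_four hε x
    have hgfval : g x - f x = (1 - Real.exp (-(bconst * t ^ 2))) * (kN 3 ^ 4 * (ε ^ 2 / d ^ 2)) := by
      simp only [hfdef, hgdef] at hgval ⊢
      rw [← htdef]
      nlinarith [hgval]
    have hkN4 : (0:ℝ) ≤ kN 3 ^ 4 := by positivity
    by_cases hx : x ∈ Metric.closedBall (0:E2) 1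
    · have hg1 : g1 ε x = d⁻¹ := by rw [g1, Set.indicator_of_mem hx]
      have hg2 : g2 x = 0 := by
        rw [g2, Set.indicator_of_notMem (by simpa using hx)]
      rw [hgfval, hmdef]
      simp only [hg1, hg2]
      have hkey : (1 - Real.exp (-(bconst * t ^ 2))) * (ε ^ 2 / d ^ 2)
          ≤ ε ^ 2 * (bconst * d⁻¹) := by
        have h1 : 1 - Real.exp (-(bconst * t ^ 2)) ≤ bconst * d := by
          have : bconst * t ^ 2 ≤ bconst * d := by
            apply mul_le_mul_of_nonneg_left _ bconst_nonneg
            nlinarith [sq_nonneg ε]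
          linarith
        have h2 : (0:ℝ) ≤ ε ^ 2 / d ^ 2 := by positivity
        calc (1 - Real.exp (-(bconst * t ^ 2))) * (ε ^ 2 / d ^ 2)
            ≤ (bconst * d) * (ε ^ 2 / d ^ 2) := mul_le_mul_of_nonneg_right h1 h2
          _ = ε ^ 2 * (bconst * d⁻¹) := by field_simp
      calc (1 - Real.exp (-(bconst * t ^ 2))) * (kN 3 ^ 4 * (ε ^ 2 / d ^ 2))
          = kN 3 ^ 4 * ((1 - Real.exp (-(bconst * t ^ 2))) * (ε ^ 2 / d ^ 2)) := by ring
        _ ≤ kN 3 ^ 4 * (ε ^ 2 * (bconst * d⁻¹)) := mul_le_mul_of_nonneg_left hkey hkN4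
        _ = kN 3 ^ 4 * ε ^ 2 * (bconst * d⁻¹ + 0) := by ring
    · have hg1 : g1 ε x = 0 := by rw [g1, Set.indicator_of_notMem hx]
      have hg2 : g2 x = ((t ^ 2) ^ 2)⁻¹ := by
        rw [g2, Set.indicator_of_mem (by simpa using hx)]
      have ht1 : 1 < t := by
        simpa [dist_zero_right, not_le, htdef] using hx
      rw [hgfval, hmdef]
      simp only [hg1, hg2]
      have hd2 : (t ^ 2) ^ 2 ≤ d ^ 2 := by nlinarith [sq_nonneg ε, sq_nonneg t]
      have ht2 : (0:ℝ) < (t ^ 2) ^ 2 := by positivity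
      have hkey : (1 - Real.exp (-(bconst * t ^ 2))) * (ε ^ 2 / d ^ 2)
          ≤ ε ^ 2 * ((t ^ 2) ^ 2)⁻¹ := by
        have h1 : ε ^ 2 / d ^ 2 ≤ ε ^ 2 / (t ^ 2) ^ 2 :=
          div_le_div_of_nonneg_left (by positivity) ht2 hd2
        have h2 : (0:ℝ) ≤ ε ^ 2 / d ^ 2 := by positivity
        calc (1 - Real.exp (-(bconst * t ^ 2))) * (ε ^ 2 / d ^ 2)
            ≤ 1 * (ε ^ 2 / d ^ 2) := mul_le_mul_of_nonneg_right hexp2 h2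
          _ = ε ^ 2 / d ^ 2 := one_mul _
          _ ≤ ε ^ 2 / (t ^ 2) ^ 2 := h1
          _ = ε ^ 2 * ((t ^ 2) ^ 2)⁻¹ := div_eq_mul_inv _ _
      calc (1 - Real.exp (-(bconst * t ^ 2))) * (kN 3 ^ 4 * (ε ^ 2 / d ^ 2))
          = kN 3 ^ 4 * ((1 - Real.exp (-(bconst * t ^ 2))) * (ε ^ 2 / d ^ 2)) := by ring
        _ ≤ kN 3 ^ 4 * (ε ^ 2 * ((t ^ 2) ^ 2)⁻¹) := mul_le_mul_of_nonneg_left hkey hkN4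
        _ = kN 3 ^ 4 * ε ^ 2 * (bconst * 0 + ((t ^ 2) ^ 2)⁻¹) := by ring
  have hmono : (∫ x : E2, (g x - f x)) ≤ ∫ x : E2, m x := by
    refine integral_mono_of_nonneg (Filter.Eventually.of_forall fun x => ?_) hm
      (Filter.Eventually.of_forall fun x => hgf_le_m x)
    exact sub_nonneg.mpr (hf_le_g x)
  refine hmono.trans ?_
  have hmsplit : (∫ x : E2, m x)
      = kN 3 ^ 4 * ε ^ 2 * (bconst * (∫ x : E2, g1 ε x) + ∫ x : E2, g2 x) := by
    rw [hmdef]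
    rw [MeasureTheory.integral_const_mul]
    congr 1
    rw [integral_add ((integrable_g1 hε).const_mul bconst) integrable_g2,
      MeasureTheory.integral_const_mul]
  rw [hmsplit]
  obtain ⟨h6, _⟩ := one_le_two_abs_log hε hε2
  have hg1le := g1_integral_le hε hε2
  have hg2eq : (∫ x : E2, g2 x) = C2 := rfl
  rw [hg2eq]
  have hkN4 : (0:ℝ) ≤ kN 3 ^ 4 := by positivity
  have habs : 0 ≤ |Real.log ε| := abs_nonneg _
  have hC2 : C2 ≤ 2 * C2 * |Real.log ε| := by nlinarith [C2_nonneg]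
  have hg1' : bconst * (∫ x : E2, g1 ε x) ≤ bconst * (Vb2 * (4 * |Real.log ε|)) :=
    mul_le_mul_of_nonneg_left hg1le bconst_nonneg
  have hfin : bconst * (∫ x : E2, g1 ε x) + C2
      ≤ (bconst * (4 * Vb2) + 2 * C2) * |Real.log ε| := by nlinarith
  rw [Cfin]
  have hsq : (0:ℝ) ≤ kN 3 ^ 4 * ε ^ 2 := by positivity
  calc kN 3 ^ 4 * ε ^ 2 * (bconst * (∫ x : E2, g1 ε x) + C2)
      ≤ kN 3 ^ 4 * ε ^ 2 * ((bconst * (4 * Vb2) + 2 * C2) * |Real.log ε|) :=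
        mul_le_mul_of_nonneg_left hfin hsq
    _ = kN 3 ^ 4 * (bconst * (4 * Vb2) + 2 * C2) * (ε ^ 2 * |Real.log ε|) := by ring

end Lem43

/-- **Lemma 4.3: critical norms of `v_ε` when `N = 3`.** -/
theorem veps_critical_norms_dim_three :
    ((fun ε : ℝ =>
        (∫ x in upperHalf 3 (by norm_num), Kw x * veps ε x ^ 6) - K2const)
      =O[𝓝[>] (0 : ℝ)] fun ε => ε ^ 2) ∧
    ((fun ε : ℝ =>
        (∫ x' : EuclideanSpace ℝ (Fin 2),
          Real.exp (‖x'‖ ^ 2 / 4) * veps ε (pad 3 x') ^ 4) - K3const)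
      =O[𝓝[>] (0 : ℝ)] fun ε => ε ^ 2 * |Real.log ε|) := by
  constructor
  · rw [Asymptotics.isBigO_iff]
    refine ⟨Lem43.aconst * Lem43.Mconst, ?_⟩
    filter_upwards [self_mem_nhdsWithin] with ε hε
    have h := Lem43.part1 hε
    rw [Real.norm_eq_abs, Real.norm_eq_abs, abs_of_nonneg (sq_nonneg ε)]
    exact h
  · rw [Asymptotics.isBigO_iff]
    refine ⟨Lem43.Cfin, ?_⟩
    have hmem : Set.Ioc (0:ℝ) (1/2) ∈ 𝓝[>] (0:ℝ) :=
      Ioc_mem_nhdsGT_of_mem (Set.mem_Ico.mpr ⟨le_refl 0, by norm_num⟩)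
    filter_upwards [hmem] with ε hε
    have h := Lem43.part2 hε.1 hε.2
    rw [Real.norm_eq_abs, Real.norm_eq_abs,
      abs_of_nonneg (mul_nonneg (sq_nonneg ε) (abs_nonneg _))]
    exact h
end
end
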